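/- arXiv:2309.15816 — 6 statements merged into one kernel-verified Lean document; each statement's English description precedes it below -/
import Mathlib

section
/- Let 𝒦 ⊆ 𝒢 be a Lie subalgebra and let 𝒦̂ be the linear span of the leading terms of the nonzero elements of 𝒦. Then 𝒦̂ is a Lie subalgebra of 𝒢 spanned by homogeneous elements, and dim_ℂ(𝒦̂) = dim_ℂ(𝒦). -/
/-!
Since `⁅𝒢 i, 𝒢 j⁆ ⊆ 𝒢 (i + j)`, the leading term of `⁅v, u⁆` is the bracket of the leading terms
of `v` and `u` whenever that bracket is nonzero, so the span of the leading terms of a Lie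
subalgebra is again closed under the bracket.

For the dimension, let `d` be the least degree occurring in a subspace `M` and `π_d` the
projection onto degree `d`. The leading terms of `M` span `π_d M` plus the span of the leading
terms of `M ∩ ker π_d`, and this sum is direct because `π_d` is the identity on the first summand
and kills the second. Since `dim π_d M + dim (M ∩ ker π_d) = dim M` and `π_d M ≠ 0`,
induction on `dim M` concludes.
-/

open DirectSum Module

/-- The degree-`i` homogeneous component of `v` with respect to the grading `𝒲`. -/
noncomputable def grComp {W : Type*} [AddCommGroup W] [Module ℂ W]
    (𝒲 : ℤ → Submodule ℂ W) [Decomposition 𝒲] (v : W) (i : ℤ) : W :=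
  ((decompose 𝒲 v) i : W)

/-- `IsLead 𝒲 v d z` : `z` is the leading term of `v`, of degree `d`. -/
def IsLead {W : Type*} [AddCommGroup W] [Module ℂ W]
    (𝒲 : ℤ → Submodule ℂ W) [Decomposition 𝒲] (v : W) (d : ℤ) (z : W) : Prop :=
  grComp 𝒲 v d = z ∧ z ≠ 0 ∧ ∀ i < d, grComp 𝒲 v i = 0

/-- The span of the leading terms of nonzero elements of a subspace `M`. -/
noncomputable def hatSub {W : Type*} [AddCommGroup W] [Module ℂ W]
    (𝒲 : ℤ → Submodule ℂ W) [Decomposition 𝒲] (M : Submodule ℂ W) : Submodule ℂ W :=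
  Submodule.span ℂ {z | ∃ v ∈ M, v ≠ 0 ∧ ∃ d : ℤ, IsLead 𝒲 v d z}

section Components

variable {W : Type*} [AddCommGroup W] [Module ℂ W] (𝒲 : ℤ → Submodule ℂ W) [Decomposition 𝒲]

noncomputable def grCompₗ (i : ℤ) : W →ₗ[ℂ] W :=
  (𝒲 i).subtype ∘ₗ component ℂ ℤ (fun j => 𝒲 j) i ∘ₗ (decomposeLinearEquiv 𝒲).toLinearMap

@[simp] lemma grCompₗ_apply (i : ℤ) (v : W) : grCompₗ 𝒲 i v = grComp 𝒲 v i := rfl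

lemma grComp_mem (v : W) (i : ℤ) : grComp 𝒲 v i ∈ 𝒲 i := (decompose 𝒲 v i).2

lemma grComp_of_mem {x : W} {i : ℤ} (hx : x ∈ 𝒲 i) : grComp 𝒲 x i = x :=
  decompose_of_mem_same 𝒲 hx

lemma grComp_of_mem_of_ne {x : W} {i j : ℤ} (hx : x ∈ 𝒲 i) (hij : i ≠ j) :
    grComp 𝒲 x j = 0 :=
  decompose_of_mem_ne 𝒲 hx hij

lemma mem_support_decompose_iff [∀ i (x : 𝒲 i), Decidable (x ≠ 0)] (v : W) (i : ℤ) :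
    i ∈ (decompose 𝒲 v).support ↔ grComp 𝒲 v i ≠ 0 := by
  simp [grComp]

lemma exists_grComp_ne_zero {v : W} (hv : v ≠ 0) : ∃ d, grComp 𝒲 v d ≠ 0 := by
  classical
  by_contra! h
  exact hv (by rw [← sum_support_decompose 𝒲 v]; exact Finset.sum_eq_zero fun i _ => h i)

lemma IsLead.mem {v z : W} {d : ℤ} (h : IsLead 𝒲 v d z) : z ∈ 𝒲 d :=
  h.1 ▸ grComp_mem 𝒲 v d

lemma IsLead.ne_zero {v z : W} {d : ℤ} (h : IsLead 𝒲 v d z) : v ≠ 0 := by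
  rintro rfl
  exact h.2.1 (h.1.symm.trans (by simp [grComp]))

lemma disjoint_ker_grCompₗ (d : ℤ) : Disjoint (𝒲 d) (LinearMap.ker (grCompₗ 𝒲 d)) := by
  rw [Submodule.disjoint_def]
  intro x hx hker
  rwa [LinearMap.mem_ker, grCompₗ_apply, grComp_of_mem 𝒲 hx] at hker

end Components

lemma finrank_map_add_finrank_inf_ker {K V V₂ : Type*} [DivisionRing K] [AddCommGroup V]
    [Module K V] [AddCommGroup V₂] [Module K V₂] [FiniteDimensional K V]
    (f : V →ₗ[K] V₂) (M : Submodule K V) :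
    finrank K (M.map f) + finrank K (M ⊓ LinearMap.ker f : Submodule K V) = finrank K M := by
  rw [← (f.domRestrict M).finrank_range_add_finrank_ker, LinearMap.range_domRestrict,
    LinearMap.ker_domRestrict, ← Submodule.finrank_map_subtype_eq, Submodule.map_comap_subtype]

section LeadingTerms

variable {W : Type*} [AddCommGroup W] [Module ℂ W] (𝒲 : ℤ → Submodule ℂ W) [Decomposition 𝒲]

lemma hatSub_mono {M N : Submodule ℂ W} (h : M ≤ N) : hatSub 𝒲 M ≤ hatSub 𝒲 N :=
  Submodule.span_mono fun _ ⟨v, hv, rest⟩ => ⟨v, h hv, rest⟩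

@[simp] lemma hatSub_bot : hatSub 𝒲 (⊥ : Submodule ℂ W) = ⊥ := by
  rw [hatSub, Submodule.span_eq_bot]
  rintro z ⟨v, hv, hv0, -⟩
  exact absurd ((Submodule.mem_bot ℂ).1 hv) hv0

lemma exists_homogeneous_span_eq_hatSub (M : Submodule ℂ W) :
    ∃ S : Set W, (∀ z ∈ S, ∃ d, z ∈ 𝒲 d) ∧ hatSub 𝒲 M = Submodule.span ℂ S :=
  ⟨{z | ∃ v ∈ M, v ≠ 0 ∧ ∃ d, IsLead 𝒲 v d z}, fun _ ⟨_, _, _, d, hz⟩ => ⟨d, hz.mem 𝒲⟩, rfl⟩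

lemma exists_lowest_degree {M : Submodule ℂ W} (hM : M.FG) (hM0 : M ≠ ⊥) :
    ∃ d, (∃ v ∈ M, grComp 𝒲 v d ≠ 0) ∧ ∀ v ∈ M, ∀ i < d, grComp 𝒲 v i = 0 := by
  classical
  obtain ⟨s, rfl⟩ := hM
  set T := s.biUnion fun w => (decompose 𝒲 w).support
  have hT : ∀ i ∉ T, ∀ v ∈ Submodule.span ℂ (s : Set W), grComp 𝒲 v i = 0 := by
    intro i hi v hv
    refine (Submodule.span_le (p := LinearMap.ker (grCompₗ 𝒲 i))).2 (fun w hw => ?_) hv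
    by_contra h
    exact hi (Finset.mem_biUnion.2 ⟨w, hw, (mem_support_decompose_iff 𝒲 w i).2 h⟩)
  have hTne : T.Nonempty := by
    by_contra hT0
    refine hM0 ((Submodule.eq_bot_iff _).2 fun v hv => ?_)
    by_contra hv0
    obtain ⟨d, hd⟩ := exists_grComp_ne_zero 𝒲 hv0
    exact hd (hT d (by simp [Finset.not_nonempty_iff_eq_empty.1 hT0]) v hv)
  refine ⟨T.min' hTne, ?_, fun v hv i hi => hT i (fun hiT => (T.min'_le i hiT).not_gt hi) v hv⟩
  obtain ⟨w, hw, hmem⟩ := Finset.mem_biUnion.1 (T.min'_mem hTne)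
  exact ⟨w, Submodule.subset_span hw, (mem_support_decompose_iff 𝒲 w _).1 hmem⟩

lemma hatSub_eq_map_sup_hatSub_inf_ker {M : Submodule ℂ W} {d : ℤ}
    (hlow : ∀ v ∈ M, ∀ i < d, grComp 𝒲 v i = 0) :
    hatSub 𝒲 M = M.map (grCompₗ 𝒲 d) ⊔ hatSub 𝒲 (M ⊓ LinearMap.ker (grCompₗ 𝒲 d)) := by
  apply le_antisymm
  · refine Submodule.span_le.2 ?_
    rintro z ⟨v, hvM, hv0, e, hz, hz0, hbelow⟩
    by_cases hvd : grComp 𝒲 v d = 0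
    · exact Submodule.mem_sup_right (Submodule.subset_span ⟨v, ⟨hvM, hvd⟩, hv0, e, hz, hz0, hbelow⟩)
    · have hed : e = d := by
        have h₁ : ¬ d < e := fun h => hvd (hbelow d h)
        have h₂ : ¬ e < d := fun h => hz0 (hz ▸ hlow v hvM e h)
        omega
      subst hed
      exact Submodule.mem_sup_left ⟨v, hvM, hz⟩
  · refine sup_le ?_ (hatSub_mono 𝒲 inf_le_left)
    rintro x ⟨v, hvM, rfl⟩
    by_cases hx0 : grCompₗ 𝒲 d v = 0
    · rw [hx0]; exact zero_mem _
    · refine Submodule.subset_span ⟨v, hvM, ?_, d, rfl, hx0, hlow v hvM⟩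
      rintro rfl
      exact hx0 (map_zero _)

lemma hatSub_inf_ker_le_ker (M : Submodule ℂ W) (d : ℤ) :
    hatSub 𝒲 (M ⊓ LinearMap.ker (grCompₗ 𝒲 d)) ≤ LinearMap.ker (grCompₗ 𝒲 d) := by
  refine Submodule.span_le.2 ?_
  rintro z ⟨v, ⟨-, hvd⟩, -, e, hz, hz0, -⟩
  have hed : e ≠ d := by
    rintro rfl
    exact hz0 (hz ▸ hvd)
  exact grComp_of_mem_of_ne 𝒲 (hz ▸ grComp_mem 𝒲 v e) hed

theorem finrank_hatSub [FiniteDimensional ℂ W] (M : Submodule ℂ W) :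
    finrank ℂ (hatSub 𝒲 M) = finrank ℂ M := by
  induction hn : finrank ℂ M using Nat.strong_induction_on generalizing M with
  | _ n ih =>
  rcases eq_or_ne M ⊥ with rfl | hM0
  · simp [← hn]
  obtain ⟨d, ⟨v, hvM, hvd⟩, hlow⟩ := exists_lowest_degree 𝒲 (IsNoetherian.noetherian M) hM0
  set φ := grCompₗ 𝒲 d
  have hrank := finrank_map_add_finrank_inf_ker φ M
  have hpos : 0 < finrank ℂ (M.map φ) := by
    refine Nat.pos_of_ne_zero fun h => hvd ?_
    have hmem : φ v ∈ M.map φ := Submodule.mem_map_of_mem hvM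
    rwa [Submodule.finrank_eq_zero.1 h, Submodule.mem_bot] at hmem
  have hdisj : M.map φ ⊓ hatSub 𝒲 (M ⊓ LinearMap.ker φ) = ⊥ :=
    ((disjoint_ker_grCompₗ 𝒲 d).mono (fun _ ⟨w, _, hw⟩ => hw ▸ grComp_mem 𝒲 w d)
      (hatSub_inf_ker_le_ker 𝒲 M d)).eq_bot
  have hsup := Submodule.finrank_sup_add_finrank_inf_eq (M.map φ) (hatSub 𝒲 (M ⊓ LinearMap.ker φ))
  rw [hdisj, finrank_bot, add_zero, ih _ (by omega) _ rfl] at hsup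
  rw [hatSub_eq_map_sup_hatSub_inf_ker 𝒲 hlow, hsup, hrank, hn]

end LeadingTerms

section Bracket

variable {L : Type*} [LieRing L] [LieAlgebra ℂ L] (𝒢 : ℤ → Submodule ℂ L) [Decomposition 𝒢]

lemma grComp_lie [∀ i (x : 𝒢 i), Decidable (x ≠ 0)] (v u : L) (n : ℤ) :
    grComp 𝒢 ⁅v, u⁆ n = ∑ i ∈ (decompose 𝒢 v).support, ∑ j ∈ (decompose 𝒢 u).support,
      grComp 𝒢 ⁅grComp 𝒢 v i, grComp 𝒢 u j⁆ n := by
  conv_lhs => rw [← sum_support_decompose 𝒢 v, ← sum_support_decompose 𝒢 u, sum_lie_sum]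
  simp only [← grCompₗ_apply, map_sum]
  rfl

variable {𝒢}

lemma IsLead.lie (hbr : ∀ i j, ∀ x ∈ 𝒢 i, ∀ y ∈ 𝒢 j, ⁅x, y⁆ ∈ 𝒢 (i + j))
    {v u z w : L} {d e : ℤ} (hv : IsLead 𝒢 v d z) (hu : IsLead 𝒢 u e w) (hzw : ⁅z, w⁆ ≠ 0) :
    IsLead 𝒢 ⁅v, u⁆ (d + e) ⁅z, w⁆ := by
  classical
  obtain ⟨hvz, hz0, hvlow⟩ := hv
  obtain ⟨huw, hw0, hulow⟩ := hu
  have hsupp {x : L} {c : ℤ} (hx : ∀ i < c, grComp 𝒢 x i = 0) :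
      ∀ i ∈ (decompose 𝒢 x).support, c ≤ i :=
    fun i hi => not_lt.1 fun h => (mem_support_decompose_iff 𝒢 x i).1 hi (hx i h)
  have hterm (i j n : ℤ) (hn : i + j ≠ n) : grComp 𝒢 ⁅grComp 𝒢 v i, grComp 𝒢 u j⁆ n = 0 :=
    grComp_of_mem_of_ne 𝒢 (hbr i j _ (grComp_mem 𝒢 v i) _ (grComp_mem 𝒢 u j)) hn
  refine ⟨?_, hzw, fun n hn => ?_⟩
  · rw [grComp_lie, Finset.sum_eq_single_of_mem d ((mem_support_decompose_iff 𝒢 v d).2 (hvz ▸ hz0)),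
      Finset.sum_eq_single_of_mem e ((mem_support_decompose_iff 𝒢 u e).2 (huw ▸ hw0)),
      grComp_of_mem 𝒢 (hbr d e _ (grComp_mem 𝒢 v d) _ (grComp_mem 𝒢 u e)), hvz, huw]
    · intro j hj hje
      exact hterm _ _ _ (by have := hsupp hulow j hj; omega)
    · intro i hi hid
      exact Finset.sum_eq_zero fun j hj => hterm _ _ _ (by
        have := hsupp hvlow i hi; have := hsupp hulow j hj; omega)
  · rw [grComp_lie]
    exact Finset.sum_eq_zero fun i hi => Finset.sum_eq_zero fun j hj => hterm _ _ _ (by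
      have := hsupp hvlow i hi; have := hsupp hulow j hj; omega)

lemma lie_mem_hatSub (hbr : ∀ i j, ∀ x ∈ 𝒢 i, ∀ y ∈ 𝒢 j, ⁅x, y⁆ ∈ 𝒢 (i + j))
    (K : LieSubalgebra ℂ L) {x y : L} (hx : x ∈ hatSub 𝒢 K.toSubmodule)
    (hy : y ∈ hatSub 𝒢 K.toSubmodule) : ⁅x, y⁆ ∈ hatSub 𝒢 K.toSubmodule := by
  have hxy := Submodule.apply_mem_map₂ (LieModule.toEnd ℂ L L : L →ₗ[ℂ] L →ₗ[ℂ] L) hx hy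
  rw [hatSub, Submodule.map₂_span_span] at hxy
  refine Submodule.span_le.2 (Set.image2_subset_iff.2 ?_) hxy
  rintro z ⟨v, hvK, -, d, hvz⟩ w ⟨u, huK, -, e, huw⟩
  by_cases hzw : ⁅z, w⁆ = 0
  · simp [hzw]
  · have hlead := hvz.lie hbr huw hzw
    exact Submodule.subset_span ⟨_, K.lie_mem hvK huK, hlead.ne_zero, _, hlead⟩

end Bracket

theorem statement3 {L : Type*} [LieRing L] [LieAlgebra ℂ L] [FiniteDimensional ℂ L]
    (𝒢 : ℤ → Submodule ℂ L) [Decomposition 𝒢]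
    (hbr : ∀ (i j : ℤ), ∀ x ∈ 𝒢 i, ∀ y ∈ 𝒢 j, ⁅x, y⁆ ∈ 𝒢 (i + j))
    (K : LieSubalgebra ℂ L) :
    (∀ x ∈ hatSub 𝒢 K.toSubmodule, ∀ y ∈ hatSub 𝒢 K.toSubmodule,
      ⁅x, y⁆ ∈ hatSub 𝒢 K.toSubmodule) ∧
    (∃ S : Set L, (∀ z ∈ S, ∃ d : ℤ, z ∈ 𝒢 d) ∧
      hatSub 𝒢 K.toSubmodule = Submodule.span ℂ S) ∧
    finrank ℂ (hatSub 𝒢 K.toSubmodule) = finrank ℂ K.toSubmodule :=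
  ⟨fun _ hx _ hy => lie_mem_hatSub hbr K hx hy,
    exists_homogeneous_span_eq_hatSub 𝒢 K.toSubmodule,
    finrank_hatSub 𝒢 K.toSubmodule⟩
end

section
/- Let I be an ideal of ℂ[x₁,…,x_n] and w ∈ ℂⁿ a point with h(w) = 0 for every h ∈ I. Let k ≥ 1, f ∈ Iᵏ (the k-th power of the ideal), e ≥ 1, v ∈ ℂⁿ, and p(t) = w + tᵉ·v + t^{e+1}·q(t) with q(t) an n-tuple of polynomials in ℂ[t]. Then in the polynomial F(t) = f(p(t)), the coefficient of tʲ vanishes for every j < k·e, and the coefficient of t^{k·e} equals D^k_{w,v}(f). -/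
/-!
Substitute `x = w + s • r(t)` with `r(t) = v + t • q(t)` into `f`, giving `G(s, t) ∈ ℂ[t][s]`.
Every `h ∈ I` vanishes at `w`, so `s` divides its image; hence `s ^ k ∣ G`, say `G = s ^ k H`.
Then `F(t) = G(t ^ e, t) = t ^ (k e) H(t ^ e, t)` (as `e ≥ 1`, `H(t ^ e, t) ≡ H(0, 0)` mod `t`),
while `f(w + s v) = G(s, 0) = s ^ k H(s, 0)`: both coefficients in question equal `H(0, 0)`.
-/

open Polynomial MvPolynomial

/-- `Dk k w v f` : the coefficient of `t^k` in the one-variable polynomial `t ↦ f (w + t • v)`. -/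
noncomputable def Dk {n : ℕ} (k : ℕ) (w v : Fin n → ℂ) (f : MvPolynomial (Fin n) ℂ) : ℂ :=
  (MvPolynomial.aeval
    (fun i => Polynomial.C (w i) + Polynomial.C (v i) * Polynomial.X) f).coeff k

section lineRestriction

variable {σ R A : Type*} [CommRing R] [CommRing A] [Algebra R A]

/-- `f ↦ f (w + s • r)`, a polynomial in `s` over `A`. -/
noncomputable def MvPolynomial.lineRestriction (w : σ → R) (r : σ → A) :
    MvPolynomial σ R →ₐ[R] A[X] :=
  aeval fun i => Polynomial.C (algebraMap R A (w i)) + Polynomial.C (r i) * Polynomial.X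

theorem MvPolynomial.algHom_lineRestriction {B : Type*} [CommRing B] [Algebra R B]
    (φ : A[X] →ₐ[R] B) (w : σ → R) (r : σ → A) (f : MvPolynomial σ R) :
    φ (lineRestriction w r f) =
      aeval (fun i => φ (Polynomial.C (algebraMap R A (w i)) + Polynomial.C (r i) * Polynomial.X)) f := by
  rw [lineRestriction, ← AlgHom.comp_apply, comp_aeval]

theorem MvPolynomial.eval_zero_lineRestriction (w : σ → R) (r : σ → A) (f : MvPolynomial σ R) :
    (lineRestriction w r f).eval 0 = algebraMap R A (eval w f) := by
  have h := algHom_lineRestriction ((Polynomial.aeval (0 : A)).restrictScalars R) w r f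
  simp only [AlgHom.coe_restrictScalars', Polynomial.coe_aeval_eq_eval] at h
  rw [h, ← aeval_eq_eval, ← aeval_algebraMap_apply]
  congr 1
  ext i
  simp

theorem MvPolynomial.X_pow_dvd_lineRestriction_of_mem_pow {I : Ideal (MvPolynomial σ R)}
    {w : σ → R} (hw : ∀ h ∈ I, eval w h = 0) (r : σ → A) {k : ℕ} {f : MvPolynomial σ R}
    (hf : f ∈ I ^ k) : (Polynomial.X : A[X]) ^ k ∣ lineRestriction w r f := by
  have hI : I.map (lineRestriction w r) ≤ Ideal.span {Polynomial.X} :=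
    Ideal.map_le_iff_le_comap.2 fun h hh => Ideal.mem_span_singleton.2 <| by
      rw [X_dvd_iff, coeff_zero_eq_eval_zero, eval_zero_lineRestriction, hw h hh, map_zero]
  have hf' : lineRestriction w r f ∈ (I ^ k).map (lineRestriction w r) := Ideal.mem_map_of_mem _ hf
  rw [Ideal.map_pow] at hf'
  rw [← Ideal.mem_span_singleton, ← Ideal.span_singleton_pow]
  exact Ideal.pow_right_mono hI k hf'

theorem MvPolynomial.aeval_lineRestriction (w : σ → R) (r : σ → A) (a : A)
    (f : MvPolynomial σ R) :
    Polynomial.aeval a (lineRestriction w r f) =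
      aeval (fun i => algebraMap R A (w i) + r i * a) f := by
  simpa using algHom_lineRestriction ((Polynomial.aeval a).restrictScalars R) w r f

theorem MvPolynomial.map_lineRestriction {B : Type*} [CommRing B] [Algebra R B]
    (ψ : A →ₐ[R] B) (w : σ → R) (r : σ → A) (f : MvPolynomial σ R) :
    (lineRestriction w r f).map ψ = lineRestriction w (ψ ∘ r) f := by
  have h := algHom_lineRestriction (Polynomial.mapAlgHom ψ) w r f
  simp only [Polynomial.coe_mapAlgHom, Polynomial.map_add, Polynomial.map_mul, Polynomial.map_C,
    Polynomial.map_X, AlgHom.coe_toRingHom, AlgHom.commutes] at h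
  rw [h, lineRestriction]
  rfl

end lineRestriction

theorem Polynomial.coeff_zero_aeval_X_pow {R : Type*} [CommRing R] {e : ℕ} (he : e ≠ 0)
    (g : R[X][X]) : (aeval (X ^ e : R[X]) g).coeff 0 = (g.coeff 0).coeff 0 := by
  rw [coeff_zero_eq_eval_zero, aeval_def, ← coe_evalRingHom, hom_eval₂, Algebra.algebraMap_self, RingHom.comp_id,
    coe_evalRingHom, eval_pow, eval_X, zero_pow he, eval₂_at_zero, coe_evalRingHom,
    ← coeff_zero_eq_eval_zero]

theorem statement11_general {n : ℕ} (I : Ideal (MvPolynomial (Fin n) ℂ)) (w : Fin n → ℂ)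
    (hw : ∀ h ∈ I, MvPolynomial.eval w h = 0)
    (k : ℕ) (f : MvPolynomial (Fin n) ℂ) (hf : f ∈ I ^ k)
    (e : ℕ) (he : 1 ≤ e) (v : Fin n → ℂ) (q : Fin n → Polynomial ℂ) :
    let F : Polynomial ℂ := MvPolynomial.aeval
      (fun i => Polynomial.C (w i) + Polynomial.C (v i) * Polynomial.X ^ e
        + q i * Polynomial.X ^ (e + 1)) f
    (∀ j : ℕ, j < k * e → F.coeff j = 0) ∧
    F.coeff (k * e) = Dk k w v f := by
  intro F
  set r : Fin n → ℂ[X] := fun i => Polynomial.C (v i) + q i * Polynomial.X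
  obtain ⟨g, hg⟩ := X_pow_dvd_lineRestriction_of_mem_pow hw r hf
  have hF : F = Polynomial.X ^ (k * e) * Polynomial.aeval (Polynomial.X ^ e) g := by
    have h := aeval_lineRestriction w r (Polynomial.X ^ e) f
    rw [hg, map_mul, map_pow, Polynomial.aeval_X, ← pow_mul, mul_comm e] at h
    rw [h]
    refine congrArg (fun x => MvPolynomial.aeval x f) (funext fun i => ?_)
    simp only [r, Polynomial.algebraMap_eq]
    ring
  have hD : Dk k w v f = (g.coeff 0).coeff 0 := by
    have hr : Polynomial.aeval (0 : ℂ) ∘ r = v := funext fun i => by simp [r]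
    have h := map_lineRestriction (Polynomial.aeval (0 : ℂ)) w r f
    rw [hr, hg, Polynomial.map_mul, Polynomial.map_pow, Polynomial.map_X] at h
    calc Dk k w v f = (lineRestriction w v f).coeff k := rfl
      _ = (g.coeff 0).coeff 0 := by
        rw [← h, coeff_X_pow_mul', if_pos le_rfl, Nat.sub_self, Polynomial.coeff_map,
          AlgHom.coe_toRingHom, Polynomial.coe_aeval_eq_eval, ← coeff_zero_eq_eval_zero]
  refine ⟨fun j hj => ?_, ?_⟩
  · rw [hF, coeff_X_pow_mul', if_neg (not_le.2 hj)]
  · rw [hF, coeff_X_pow_mul', if_pos le_rfl, Nat.sub_self, coeff_zero_aeval_X_pow (by omega), hD]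

theorem statement11 {n : ℕ} (I : Ideal (MvPolynomial (Fin n) ℂ)) (w : Fin n → ℂ)
    (hw : ∀ h ∈ I, MvPolynomial.eval w h = 0)
    (k : ℕ) (hk : 1 ≤ k) (f : MvPolynomial (Fin n) ℂ) (hf : f ∈ I ^ k)
    (e : ℕ) (he : 1 ≤ e) (v : Fin n → ℂ) (q : Fin n → Polynomial ℂ) :
    let F : Polynomial ℂ := MvPolynomial.aeval
      (fun i => Polynomial.C (w i) + Polynomial.C (v i) * Polynomial.X ^ e
        + q i * Polynomial.X ^ (e + 1)) f
    (∀ j : ℕ, j < k * e → F.coeff j = 0) ∧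
    F.coeff (k * e) = Dk k w v f :=
  statement11_general I w hw k f hf e he v q
end

section
/- Let I be an ideal of ℂ[x₁,…,x_n], w ∈ ℂⁿ, and v, v′ ∈ ℂⁿ such that for every h ∈ I one has h(w) = 0 and D¹_{w,v′}(h) = 0 (i.e. v′ is a first-order tangent direction to the zero set of I at w). Then for every r ≥ 1 and every f ∈ Iʳ, D^r_{w,v+v′}(f) = D^r_{w,v}(f). -/
/-!
Restriction to the line `t ↦ w + t u` is a ring map `φ_u : R[x₁,…,xₙ] → R[t]`, and `D^k_{w,u} f` is
the `t^k`-coefficient of `φ_u f`. For `h ∈ I` both `φ_{v+v'} h` and `φ_v h` vanish at `t = 0`, and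
since the `t`-coefficient is additive in the direction, they agree modulo `t²`. With `a = φ_{v+v'}`
and `b = φ_v`, the identity `a(hg) - b(hg) = a(h) (a(g) - b(g)) + (a(h) - b(h)) b(g)` then gives by
induction `a f ≡ b f` modulo `t^{r+1}` for `f ∈ I^r`.
-/

open Polynomial MvPolynomial

section RingHom

variable {A B F : Type*} [CommRing A] [CommRing B] [FunLike F A B] [RingHomClass F A B]

theorem Ideal.sub_mem_pow_succ_succ_of_map_le {a b : F} {I : Ideal A} {J : Ideal B}
    (ha : I.map a ≤ J) (hb : I.map b ≤ J) (hab : ∀ h ∈ I, a h - b h ∈ J ^ 2) (r : ℕ) :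
    ∀ f ∈ I ^ (r + 1), a f - b f ∈ J ^ (r + 2) := by
  induction r with
  | zero => simpa using hab
  | succ r ih =>
    intro f hf
    rw [pow_succ'] at hf
    refine Submodule.mul_induction_on hf (fun h hh g hg => ?_) (fun x y hx hy => ?_)
    · have hbg : b g ∈ J ^ (r + 1) :=
        Ideal.pow_right_mono hb (r + 1) (Ideal.map_pow b I (r + 1) ▸ Ideal.mem_map_of_mem b hg)
      have split : a (h * g) - b (h * g) = a h * (a g - b g) + (a h - b h) * b g := by
        simp only [map_mul]; ring
      rw [split]
      refine Ideal.add_mem _ ?_ ?_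
      · rw [pow_succ' J (r + 2)]
        exact Ideal.mul_mem_mul (ha (Ideal.mem_map_of_mem a hh)) (ih g hg)
      · rw [show r + 1 + 2 = 2 + (r + 1) by ring, pow_add]
        exact Ideal.mul_mem_mul (hab h hh) hbg
    · simpa only [map_add, add_sub_add_comm] using Ideal.add_mem _ hx hy

end RingHom

theorem Polynomial.coeff_one_mul {R : Type*} [CommSemiring R] (p q : R[X]) :
    (p * q).coeff 1 = p.coeff 0 * q.coeff 1 + p.coeff 1 * q.coeff 0 := by
  simp [Polynomial.coeff_mul, Finset.Nat.antidiagonal_succ, add_comm]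

namespace MvPolynomial

variable {σ R : Type*} [CommRing R]

noncomputable def lineRestriction_s13 (w u : σ → R) : MvPolynomial σ R →ₐ[R] R[X] :=
  aeval fun i => Polynomial.C (w i) + Polynomial.C (u i) * Polynomial.X

theorem coeff_zero_lineRestriction (w u : σ → R) (f : MvPolynomial σ R) :
    (lineRestriction_s13 w u f).coeff 0 = eval w f := by
  rw [coeff_zero_eq_eval_zero, lineRestriction_s13, aeval_def, ← coe_evalRingHom, eval₂_comp_left]
  rw [show (evalRingHom 0).comp (algebraMap R R[X]) = RingHom.id R by ext; simp]
  simp only [Function.comp_def, coe_evalRingHom, Polynomial.eval_add, Polynomial.eval_C,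
    Polynomial.eval_mul, Polynomial.eval_X, mul_zero, add_zero]
  rfl

theorem coeff_one_lineRestriction_add (w u u' : σ → R) (f : MvPolynomial σ R) :
    (lineRestriction_s13 w (u + u') f).coeff 1 =
      (lineRestriction_s13 w u f).coeff 1 + (lineRestriction_s13 w u' f).coeff 1 := by
  induction f using MvPolynomial.induction_on with
  | C c => simp [lineRestriction_s13]
  | add p q hp hq => simp only [map_add, Polynomial.coeff_add, hp, hq]; ring
  | mul_X p i hp =>
    simp only [map_mul, Polynomial.coeff_one_mul, coeff_zero_lineRestriction, hp]
    simp [lineRestriction_s13]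
    ring

theorem lineRestriction_mem_span_X_iff (w u : σ → R) (f : MvPolynomial σ R) :
    lineRestriction_s13 w u f ∈ Ideal.span {Polynomial.X} ↔ eval w f = 0 := by
  rw [Ideal.mem_span_singleton, Polynomial.X_dvd_iff, coeff_zero_lineRestriction]

theorem coeff_lineRestriction_add_eq_of_mem_pow {I : Ideal (MvPolynomial σ R)} {w v v' : σ → R}
    (hw : ∀ h ∈ I, eval w h = 0) (htan : ∀ h ∈ I, (lineRestriction_s13 w v' h).coeff 1 = 0) (r : ℕ) :
    ∀ f ∈ I ^ (r + 1),
      (lineRestriction_s13 w (v + v') f).coeff (r + 1) = (lineRestriction_s13 w v f).coeff (r + 1) := by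
  have hmap (u : σ → R) : I.map (lineRestriction_s13 w u) ≤ Ideal.span {Polynomial.X} :=
    Ideal.map_le_iff_le_comap.2 fun h hh => (lineRestriction_mem_span_X_iff w u h).2 (hw h hh)
  have hsq : ∀ h ∈ I, lineRestriction_s13 w (v + v') h - lineRestriction_s13 w v h ∈
      Ideal.span {(Polynomial.X : R[X])} ^ 2 := by
    intro h hh
    rw [Ideal.span_singleton_pow, Ideal.mem_span_singleton, Polynomial.X_pow_dvd_iff]
    rintro (_ | _ | d) hd
    · simp [coeff_zero_lineRestriction]
    · simp [coeff_one_lineRestriction_add, htan h hh]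
    · omega
  intro f hf
  have hdiff := Ideal.sub_mem_pow_succ_succ_of_map_le (hmap _) (hmap _) hsq r f hf
  rw [Ideal.span_singleton_pow, Ideal.mem_span_singleton, Polynomial.X_pow_dvd_iff] at hdiff
  exact sub_eq_zero.1 (by simpa using hdiff (r + 1) (by omega))

end MvPolynomial

theorem statement13 {n : ℕ} (I : Ideal (MvPolynomial (Fin n) ℂ)) (w : Fin n → ℂ)
    (v v' : Fin n → ℂ)
    (hw : ∀ h ∈ I, MvPolynomial.eval w h = 0)
    (htan : ∀ h ∈ I, Dk 1 w v' h = 0) :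
    ∀ r : ℕ, 1 ≤ r → ∀ f ∈ I ^ r, Dk r w (v + v') f = Dk r w v f := by
  intro r hr f hf
  obtain ⟨r, rfl⟩ := Nat.exists_eq_add_of_le' hr
  exact coeff_lineRestriction_add_eq_of_mem_pow hw htan r f hf
end

section
/- Let r ≥ 1, let Ξ ⊆ ℝʳ be a finite set, and let ℓ ∈ ℝʳ satisfy ⟨χ, ℓ⟩ ≥ 0 for every χ ∈ Ξ (standard inner product). Set F_z := {χ ∈ Ξ : ⟨χ, ℓ⟩ = 0}. If dim span_ℝ(Ξ) ≥ dim span_ℝ(F_z) + 2, then there exists 𝔱 ∈ ℝʳ with ⟨χ, 𝔱⟩ ≥ 0 for all χ ∈ Ξ such that the face F := {χ ∈ Ξ : ⟨χ, 𝔱⟩ = 0} satisfies F_z ⊆ F and dim span_ℝ(F_z) < dim span_ℝ(F) < dim span_ℝ(Ξ). -/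
open Module

/-- the dot-product-with-t functional as a linear map -/
noncomputable def dotL {r : ℕ} (t : Fin r → ℝ) : (Fin r → ℝ) →ₗ[ℝ] ℝ :=
  ∑ i, t i • LinearMap.proj i

lemma dotL_apply {r : ℕ} (t x : Fin r → ℝ) : dotL t x = ∑ i, x i * t i := by
  simp [dotL, mul_comm]

/-- existence of a vector in W orthogonal to V and ℓ -/
lemma exists_orth (r : ℕ) (V W : Submodule ℝ (Fin r → ℝ)) (ℓ : Fin r → ℝ)
    (hd : finrank ℝ V + 2 ≤ finrank ℝ W) :
    ∃ u : Fin r → ℝ, u ∈ W ∧ u ≠ 0 ∧ (∑ i, u i * ℓ i = 0) ∧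
      ∀ v ∈ V, ∑ i, v i * u i = 0 := by
  let E := EuclideanSpace ℝ (Fin r)
  let e : E ≃ₗ[ℝ] (Fin r → ℝ) := WithLp.linearEquiv 2 ℝ (Fin r → ℝ)
  let V' : Submodule ℝ E := V.comap e.toLinearMap
  let W' : Submodule ℝ E := W.comap e.toLinearMap
  let ℓ' : E := e.symm ℓ
  let S : Submodule ℝ E := V' ⊔ (ℝ ∙ ℓ')
  have h1 : finrank ℝ S + finrank ℝ Sᗮ = finrank ℝ E :=
    Submodule.finrank_add_finrank_orthogonal S
  have h2 : finrank ℝ ↥(W' ⊔ Sᗮ) + finrank ℝ ↥(W' ⊓ Sᗮ) = finrank ℝ W' + finrank ℝ Sᗮ :=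
    Submodule.finrank_sup_add_finrank_inf_eq W' Sᗮ
  have h3 : finrank ℝ ↥(V' ⊔ (ℝ ∙ ℓ')) + finrank ℝ ↥(V' ⊓ (ℝ ∙ ℓ')) =
      finrank ℝ V' + finrank ℝ ↥(ℝ ∙ ℓ') :=
    Submodule.finrank_sup_add_finrank_inf_eq V' (ℝ ∙ ℓ')
  have h4 : finrank ℝ ↥(ℝ ∙ ℓ') ≤ 1 := by
    have := finrank_span_le_card (R := ℝ) ({ℓ'} : Set E)
    simpa using this
  have h5 : finrank ℝ ↥(W' ⊔ Sᗮ) ≤ finrank ℝ E := Submodule.finrank_le _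
  have hVV : finrank ℝ V' = finrank ℝ V := by
    show finrank ℝ (V.comap (e : E →ₗ[ℝ] _)) = _
    rw [Submodule.comap_equiv_eq_map_symm]; exact LinearEquiv.finrank_map_eq _ _
  have hWW : finrank ℝ W' = finrank ℝ W := by
    show finrank ℝ (W.comap (e : E →ₗ[ℝ] _)) = _
    rw [Submodule.comap_equiv_eq_map_symm]; exact LinearEquiv.finrank_map_eq _ _
  have hpos : 0 < finrank ℝ ↥(W' ⊓ Sᗮ) := by
    have hS : finrank ℝ S = finrank ℝ ↥(V' ⊔ (ℝ ∙ ℓ')) := rfl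
    omega
  haveI : Nontrivial ↥(W' ⊓ Sᗮ) := Module.finrank_pos_iff.mp hpos
  obtain ⟨⟨u, hu⟩, h0⟩ := exists_ne (0 : ↥(W' ⊓ Sᗮ))
  have hune : u ≠ 0 := by simpa [Subtype.ext_iff] using h0
  have huW : u ∈ W' := hu.1
  have huS : u ∈ Sᗮ := hu.2
  have hperp : ∀ v ∈ S, (inner ℝ v u : ℝ) = 0 := fun v hv =>
    (Submodule.mem_orthogonal S u).mp huS v hv
  have hip : ∀ x y : E,
      (inner ℝ x y : ℝ) = ∑ i, e x i * e y i := by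
    intro x y
    rw [PiLp.inner_apply]
    simp [RCLike.inner_apply, e, mul_comm]
    rfl
  refine ⟨e u, huW, by simpa using hune, ?_, ?_⟩
  · have := hperp ℓ' (le_sup_right (a := V') (Submodule.mem_span_singleton_self ℓ'))
    rw [hip] at this
    simp only [ℓ', LinearEquiv.apply_symm_apply] at this
    calc ∑ i, e u i * ℓ i = ∑ i, ℓ i * e u i := by
          exact Finset.sum_congr rfl fun i _ => mul_comm _ _
      _ = 0 := this
  · intro v hv
    have := hperp (e.symm v) (le_sup_left (b := (ℝ ∙ ℓ')) (by simpa [V'] using hv))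
    rw [hip] at this
    simp only [LinearEquiv.apply_symm_apply] at this
    exact this

theorem statement15 (r : ℕ) (hr : 1 ≤ r) (Ξ : Set (Fin r → ℝ)) (hfin : Ξ.Finite)
    (ℓ : Fin r → ℝ) (hℓ : ∀ χ ∈ Ξ, 0 ≤ ∑ i, χ i * ℓ i)
    (hdim : finrank ℝ (Submodule.span ℝ {χ ∈ Ξ | ∑ i, χ i * ℓ i = 0}) + 2 ≤
      finrank ℝ (Submodule.span ℝ Ξ)) :
    ∃ t : Fin r → ℝ,
      (∀ χ ∈ Ξ, 0 ≤ ∑ i, χ i * t i) ∧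
      {χ ∈ Ξ | ∑ i, χ i * ℓ i = 0} ⊆ {χ ∈ Ξ | ∑ i, χ i * t i = 0} ∧
      finrank ℝ (Submodule.span ℝ {χ ∈ Ξ | ∑ i, χ i * ℓ i = 0}) <
        finrank ℝ (Submodule.span ℝ {χ ∈ Ξ | ∑ i, χ i * t i = 0}) ∧
      finrank ℝ (Submodule.span ℝ {χ ∈ Ξ | ∑ i, χ i * t i = 0}) <
        finrank ℝ (Submodule.span ℝ Ξ) := by
  classical
  set F : Set (Fin r → ℝ) := {χ ∈ Ξ | ∑ i, χ i * ℓ i = 0} with hF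
  set V : Submodule ℝ (Fin r → ℝ) := Submodule.span ℝ F with hV
  set W : Submodule ℝ (Fin r → ℝ) := Submodule.span ℝ Ξ with hW
  -- step 1: find u with a negative direction
  have key : ∃ u : Fin r → ℝ, u ∈ W ∧ (0 < ∑ i, u i * u i) ∧ (∑ i, u i * ℓ i = 0) ∧
      (∀ v ∈ V, ∑ i, v i * u i = 0) ∧ ∃ χw ∈ Ξ, ∑ i, χw i * u i < 0 := by
    obtain ⟨u, huW, hune, huℓ, huV⟩ := exists_orth r V W ℓ hdim
    have husq : 0 < ∑ i, u i * u i := by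
      obtain ⟨j, hj⟩ := Function.ne_iff.mp hune
      refine Finset.sum_pos' (fun i _ => mul_self_nonneg _) ⟨j, Finset.mem_univ j, ?_⟩
      exact mul_self_pos.mpr hj
    have hne : ∃ χw ∈ Ξ, ∑ i, χw i * u i ≠ 0 := by
      by_contra h
      push_neg at h
      have hΞ : Ξ ⊆ (LinearMap.ker (dotL u) : Submodule ℝ (Fin r → ℝ)) := by
        intro χ hχ
        simp only [SetLike.mem_coe, LinearMap.mem_ker, dotL_apply]
        exact h χ hχ
      have : u ∈ LinearMap.ker (dotL u) :=
        (Submodule.span_le.mpr hΞ : W ≤ _) huW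
      rw [LinearMap.mem_ker, dotL_apply] at this
      exact absurd this (ne_of_gt husq)
    obtain ⟨χw, hχwΞ, hχw⟩ := hne
    rcases hχw.lt_or_gt with h | h
    · exact ⟨u, huW, husq, huℓ, huV, χw, hχwΞ, h⟩
    · refine ⟨-u, neg_mem huW, ?_, ?_, ?_, χw, hχwΞ, ?_⟩
      · simpa [neg_mul_neg] using husq
      · simp only [Pi.neg_apply, neg_mul]
        rw [Finset.sum_neg_distrib]
        simp [huℓ]
      · intro v hv
        simp only [Pi.neg_apply, mul_neg]
        rw [Finset.sum_neg_distrib]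
        simp [huV v hv]
      · simp only [Pi.neg_apply, mul_neg]
        rw [Finset.sum_neg_distrib]
        simpa using h
  obtain ⟨u, huW, husq, huℓ, huV, χw, hχwΞ, hχwneg⟩ := key
  -- step 2: minimize ratio over N
  set N : Set (Fin r → ℝ) := {χ ∈ Ξ | ∑ i, χ i * u i < 0} with hN
  have hNfin : N.Finite := hfin.subset (Set.sep_subset _ _)
  have hNne : N.Nonempty := ⟨χw, hχwΞ, hχwneg⟩
  have hNposℓ : ∀ χ ∈ N, 0 < ∑ i, χ i * ℓ i := by
    rintro χ ⟨hχΞ, hχu⟩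
    rcases (hℓ χ hχΞ).lt_or_eq with h | h
    · exact h
    · exfalso
      have hχF : χ ∈ F := ⟨hχΞ, h.symm⟩
      have := huV χ (Submodule.subset_span hχF)
      exact absurd this (ne_of_lt hχu)
  obtain ⟨χm, hχmN, hχmmin⟩ :=
    Set.exists_min_image N (fun χ => (∑ i, χ i * ℓ i) / (-(∑ i, χ i * u i))) hNfin hNne
  set s : ℝ := (∑ i, χm i * ℓ i) / (-(∑ i, χm i * u i)) with hs
  have hχmu : ∑ i, χm i * u i < 0 := hχmN.2
  have hspos : 0 < s := div_pos (hNposℓ χm hχmN) (by linarith)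
  set t : Fin r → ℝ := fun i => ℓ i + s * u i with ht
  have hdot : ∀ χ : Fin r → ℝ,
      ∑ i, χ i * t i = (∑ i, χ i * ℓ i) + s * ∑ i, χ i * u i := by
    intro χ
    rw [Finset.mul_sum, ← Finset.sum_add_distrib]
    exact Finset.sum_congr rfl fun i _ => by simp [ht]; ring
  -- nonnegativity
  have hnn : ∀ χ ∈ Ξ, 0 ≤ ∑ i, χ i * t i := by
    intro χ hχ
    rw [hdot]
    by_cases h : ∑ i, χ i * u i < 0
    · have hmin := hχmmin χ ⟨hχ, h⟩
      rw [le_div_iff₀ (by linarith : (0:ℝ) < -(∑ i, χ i * u i))] at hmin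
      nlinarith
    · push_neg at h
      have := hℓ χ hχ
      nlinarith
  -- F ⊆ F_t
  have hsub : F ⊆ {χ ∈ Ξ | ∑ i, χ i * t i = 0} := by
    rintro χ ⟨hχΞ, hχℓ⟩
    refine ⟨hχΞ, ?_⟩
    rw [hdot, hχℓ, huV χ (Submodule.subset_span ⟨hχΞ, hχℓ⟩)]
    ring
  -- χm ∈ F_t
  have hχmFt : χm ∈ {χ ∈ Ξ | ∑ i, χ i * t i = 0} := by
    refine ⟨hχmN.1, ?_⟩
    have hd : (∑ i, χm i * u i) ≠ 0 := ne_of_lt hχmu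
    rw [hdot, hs, div_mul_eq_mul_div, div_neg, mul_div_assoc, div_self hd, mul_one]
    ring
  -- exists strictly positive χ₁
  have hex : ∃ χ₁ ∈ Ξ, 0 < ∑ i, χ₁ i * t i := by
    by_contra h
    push_neg at h
    have hΞ : Ξ ⊆ (LinearMap.ker (dotL t) : Submodule ℝ (Fin r → ℝ)) := by
      intro χ hχ
      simp only [SetLike.mem_coe, LinearMap.mem_ker, dotL_apply]
      exact le_antisymm (h χ hχ) (hnn χ hχ)
    have hu : u ∈ LinearMap.ker (dotL t) :=
      (Submodule.span_le.mpr hΞ : W ≤ _) huW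
    rw [LinearMap.mem_ker, dotL_apply, hdot] at hu
    nlinarith
  obtain ⟨χ₁, hχ₁Ξ, hχ₁⟩ := hex
  set Ft : Set (Fin r → ℝ) := {χ ∈ Ξ | ∑ i, χ i * t i = 0} with hFt
  haveI : FiniteDimensional ℝ (Submodule.span ℝ Ft) :=
    FiniteDimensional.span_of_finite ℝ (hfin.subset (Set.sep_subset _ _))
  haveI : FiniteDimensional ℝ W :=
    FiniteDimensional.span_of_finite ℝ hfin
  -- dim V < dim span Ft
  have hlt1 : finrank ℝ V < finrank ℝ (Submodule.span ℝ Ft) := by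
    refine Submodule.finrank_lt_finrank_of_lt (lt_of_le_of_ne (Submodule.span_mono hsub) ?_)
    intro hEq
    have hχmV : χm ∈ V := by
      rw [hEq]; exact Submodule.subset_span hχmFt
    exact absurd (huV χm hχmV) (ne_of_lt hχmu)
  -- dim span Ft < dim W
  have hlt2 : finrank ℝ (Submodule.span ℝ Ft) < finrank ℝ W := by
    refine Submodule.finrank_lt_finrank_of_lt
      (lt_of_le_of_ne (Submodule.span_mono (Set.sep_subset _ _)) ?_)
    intro hEq
    have hker : Submodule.span ℝ Ft ≤ LinearMap.ker (dotL t) := by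
      refine Submodule.span_le.mpr ?_
      rintro χ ⟨_, hχt⟩
      simp only [SetLike.mem_coe, LinearMap.mem_ker, dotL_apply]
      exact hχt
    have : χ₁ ∈ LinearMap.ker (dotL t) := by
      apply hker
      rw [hEq]
      exact Submodule.subset_span hχ₁Ξ
    rw [LinearMap.mem_ker, dotL_apply] at this
    exact absurd this (ne_of_gt hχ₁)
  exact ⟨t, hnn, hsub, hlt1, hlt2⟩
end

section
/- Let s, r be nonnegative integers and let R be an (s+r)×(s+r) complex matrix that is diagonalizable, i.e. there exist an invertible matrix P and a diagonal matrix Δ with R = P Δ P⁻¹. Then there exists an s×r complex matrix X such that, writing S for the block matrix with blocks [[I_s, X], [0, I_r]] (which is invertible), the conjugate W = S R S⁻¹ is block lower triangular: its upper-right s×r block is zero. -/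
open Matrix

/-- If the columns of an `r × m` matrix span `ℂ^r`, one can select `r` columns
forming an invertible matrix. -/
lemma aux_exists_cols {m : Type*} [Fintype m] {r : ℕ} (Q : Matrix (Fin r) m ℂ)
    (hQ : Function.Surjective Q.mulVecLin) :
    ∃ σ : Fin r → m, IsUnit (Q.submatrix id σ) := by
  have hspan : Submodule.span ℂ (Set.range Qᵀ) = ⊤ := by
    rw [show Set.range Qᵀ = Set.range Q.col from rfl, ← Matrix.range_mulVecLin]; exact LinearMap.range_eq_top.mpr hQ
  obtain ⟨b, hbt, hb, hind⟩ := exists_linearIndependent ℂ (Set.range Qᵀ)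
  rw [hspan] at hb
  have hbtop : ⊤ ≤ Submodule.span ℂ (Set.range ((↑) : b → (Fin r → ℂ))) := by
    rw [Subtype.range_coe]; exact hb.ge
  let B : Module.Basis b ℂ (Fin r → ℂ) := Module.Basis.mk hind hbtop
  haveI : Fintype b := FiniteDimensional.fintypeBasisIndex B
  have hcard : Fintype.card b = r := by
    have h1 := Module.finrank_eq_card_basis B
    simpa using h1.symm
  let e : Fin r ≃ b := (Fintype.equivFinOfCardEq hcard).symm
  choose σ hσ using fun i : Fin r => hbt (e i).2
  refine ⟨σ, ?_⟩
  rw [← Matrix.linearIndependent_cols_iff_isUnit]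
  have hcols : (fun k => (Q.submatrix id σ)ᵀ k) = fun k => ((e k : (Fin r → ℂ))) := by
    funext k
    rw [← hσ k]
    rfl
  rw [show (Q.submatrix id σ).col = fun k => (Q.submatrix id σ)ᵀ k from rfl, hcols]
  exact hind.comp (fun i => e i) (fun i j hij => e.injective hij)

theorem statement18 (s r : ℕ)
    (R : Matrix (Fin s ⊕ Fin r) (Fin s ⊕ Fin r) ℂ)
    (hdiag : ∃ (P : Matrix (Fin s ⊕ Fin r) (Fin s ⊕ Fin r) ℂ) (d : (Fin s ⊕ Fin r) → ℂ),
      IsUnit P.det ∧ R = P * Matrix.diagonal d * P⁻¹) :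
    ∃ X : Matrix (Fin s) (Fin r) ℂ,
      IsUnit (Matrix.fromBlocks (1 : Matrix (Fin s) (Fin s) ℂ) X 0
        (1 : Matrix (Fin r) (Fin r) ℂ)).det ∧
      ((Matrix.fromBlocks (1 : Matrix (Fin s) (Fin s) ℂ) X 0 (1 : Matrix (Fin r) (Fin r) ℂ)) *
          R *
          (Matrix.fromBlocks (1 : Matrix (Fin s) (Fin s) ℂ) X 0
            (1 : Matrix (Fin r) (Fin r) ℂ))⁻¹).toBlocks₁₂ = 0 := by
  obtain ⟨P, d, hPdet, hR⟩ := hdiag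
  have hPinv : P * P⁻¹ = 1 := Matrix.mul_nonsing_inv P hPdet
  have hPinv' : P⁻¹ * P = 1 := Matrix.nonsing_inv_mul P hPdet
  have hRP : R * P = P * Matrix.diagonal d := by
    rw [hR, Matrix.mul_assoc, hPinv', Matrix.mul_one]
  -- the bottom r rows of P
  set Q : Matrix (Fin r) (Fin s ⊕ Fin r) ℂ := P.submatrix Sum.inr id with hQdef
  have hQsurj : Function.Surjective Q.mulVecLin := by
    intro y
    refine ⟨P⁻¹ *ᵥ Sum.elim 0 y, ?_⟩
    have h1 : Q *ᵥ (P⁻¹ *ᵥ Sum.elim 0 y) = y := by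
      funext i
      have h2 : (Q *ᵥ (P⁻¹ *ᵥ Sum.elim 0 y)) i = (P *ᵥ (P⁻¹ *ᵥ Sum.elim 0 y)) (Sum.inr i) := by
        simp [hQdef, Matrix.mulVec, dotProduct, Matrix.submatrix_apply]
      rw [h2, Matrix.mulVec_mulVec, hPinv, Matrix.one_mulVec]
      rfl
    simpa [Matrix.mulVecLin_apply] using h1
  obtain ⟨σ, hσunit⟩ := aux_exists_cols Q hQsurj
  set V₁ : Matrix (Fin s) (Fin r) ℂ := P.submatrix Sum.inl σ with hV₁
  set V₂ : Matrix (Fin r) (Fin r) ℂ := P.submatrix Sum.inr σ with hV₂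
  have hV₂unit : IsUnit V₂.det := by
    rw [← Matrix.isUnit_iff_isUnit_det]
    convert hσunit using 2
    rfl
  have hV₂inv : V₂ * V₂⁻¹ = 1 := Matrix.mul_nonsing_inv V₂ hV₂unit
  have hV₂inv' : V₂⁻¹ * V₂ = 1 := Matrix.nonsing_inv_mul V₂ hV₂unit
  set D' : Matrix (Fin r) (Fin r) ℂ := Matrix.diagonal (fun j => d (σ j)) with hD'
  set A := R.toBlocks₁₁ with hA
  set B := R.toBlocks₁₂ with hB
  set C := R.toBlocks₂₁ with hC
  set D := R.toBlocks₂₂ with hD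
  have hkey : ∀ (i : Fin s ⊕ Fin r) (j : Fin r),
      ∑ k, R i k * P k (σ j) = P i (σ j) * d (σ j) := by
    intro i j
    have := congrFun (congrFun hRP i) (σ j)
    rw [Matrix.mul_diagonal] at this
    simpa [Matrix.mul_apply] using this
  have eq1 : A * V₁ + B * V₂ = V₁ * D' := by
    ext i j
    rw [Matrix.add_apply, hD', Matrix.mul_diagonal]
    have := hkey (Sum.inl i) j
    rw [Fintype.sum_sum_type] at this
    simpa [Matrix.mul_apply, hA, hB, hV₁, hV₂,
      Matrix.toBlocks₁₁, Matrix.toBlocks₁₂, Matrix.submatrix_apply] using this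
  have eq2 : C * V₁ + D * V₂ = V₂ * D' := by
    ext i j
    rw [Matrix.add_apply, hD', Matrix.mul_diagonal]
    have := hkey (Sum.inr i) j
    rw [Fintype.sum_sum_type] at this
    simpa [Matrix.mul_apply, hC, hD, hV₁, hV₂,
      Matrix.toBlocks₂₁, Matrix.toBlocks₂₂, Matrix.submatrix_apply] using this
  refine ⟨-(V₁ * V₂⁻¹), ?_, ?_⟩
  · rw [Matrix.det_fromBlocks_zero₂₁]
    simp
  · set X : Matrix (Fin s) (Fin r) ℂ := -(V₁ * V₂⁻¹) with hX
    have hXV₂ : X * V₂ = -V₁ := by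
      rw [hX, Matrix.neg_mul, Matrix.mul_assoc, hV₂inv', Matrix.mul_one]
    have hSinv : (Matrix.fromBlocks (1 : Matrix (Fin s) (Fin s) ℂ) X 0
        (1 : Matrix (Fin r) (Fin r) ℂ))⁻¹ =
        Matrix.fromBlocks 1 (-X) 0 1 := by
      apply Matrix.inv_eq_right_inv
      rw [Matrix.fromBlocks_multiply]
      simp [Matrix.fromBlocks_one]
    rw [hSinv]
    have hRblocks : R = Matrix.fromBlocks A B C D := (Matrix.fromBlocks_toBlocks R).symm
    rw [hRblocks, Matrix.fromBlocks_multiply, Matrix.fromBlocks_multiply,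
      Matrix.toBlocks_fromBlocks₁₂, Matrix.one_mul, Matrix.one_mul, Matrix.mul_one]
    have h3 : (-X) * V₂ = V₁ := by rw [Matrix.neg_mul, hXV₂, neg_neg]
    have hmul : ((A + X * C) * (-X) + (B + X * D)) * V₂ = 0 := by
      calc ((A + X * C) * (-X) + (B + X * D)) * V₂
          = (A + X * C) * ((-X) * V₂) + (B + X * D) * V₂ := by
            rw [Matrix.add_mul, Matrix.mul_assoc]
        _ = (A * V₁ + B * V₂) + X * (C * V₁ + D * V₂) := by
            rw [h3]
            simp only [Matrix.mul_add, Matrix.add_mul, Matrix.mul_assoc]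
            abel
        _ = V₁ * D' + X * (V₂ * D') := by rw [eq1, eq2]
        _ = V₁ * D' + (X * V₂) * D' := by rw [Matrix.mul_assoc]
        _ = 0 := by rw [hXV₂, Matrix.neg_mul]; simp
    calc (A + X * C) * (-X) + (B + X * D)
        = (((A + X * C) * (-X) + (B + X * D)) * V₂) * V₂⁻¹ := by
          rw [Matrix.mul_assoc, hV₂inv, Matrix.mul_one]
      _ = 0 := by rw [hmul, Matrix.zero_mul]
end

section
/- Let d be an integer and y ∈ V a nonzero element with homogeneous components y_i satisfying y_i = 0 for i < d and z := y_d ≠ 0. Define 𝒢_{y,d} = {𝔤 ∈ 𝒢 : the component (𝔤·y)_a = 0 for all a < d}, 𝒫 = ⊕_{i≥0} 𝒢_i, 𝒦 = {𝔤 ∈ 𝒢 : 𝔤·y = 0}, and ℋ = {𝔤 ∈ 𝒢 : 𝔤·z = 0}. Then 𝒢_{y,d} is a linear subspace of 𝒢 containing 𝒫 + 𝒦, and there exists a linear subspace F ⊆ 𝒢_{y,d} with dim_ℂ(F) ≤ dim_ℂ(ℋ) − dim_ℂ(𝒦) such that 𝒢_{y,d} = 𝒫 + 𝒦 + F (sum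 of subspaces). -/
/-!
Choose in each `𝒢 i` a complement `S i` of `𝒢 i ⊓ ℋ`. If `s ∈ ⨁ S i` is nonzero and its lowest
nonzero component has degree `i₀`, the degree-`(d + i₀)` component of `⁅s, y⁆` is
`⁅s_{i₀}, z⁆ ≠ 0`. Hence `⨁_{i<0} S i` meets `𝒢_{y,d}` trivially and `⨁_{i≥0} S i ≤ 𝒫` meets `𝒦`
trivially, while `𝒢 = ⨁ S i + ℋ`. Counting dimensions gives
`dim 𝒢_{y,d} + dim 𝒦 ≤ dim ℋ + dim (𝒫 + 𝒦)`, and `F` is any complement of `𝒫 + 𝒦` in `𝒢_{y,d}`.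
-/

open DirectSum Module

/-- The Lie algebra stabilizer `{𝔤 ∈ L | 𝔤 ⬝ v = 0}` of `v`, as a subspace of `L`. -/
def lieStab (L : Type*) {V : Type*} [LieRing L] [LieAlgebra ℂ L]
    [AddCommGroup V] [Module ℂ V] [LieRingModule L V] [LieModule ℂ L V]
    (v : V) : Submodule ℂ L where
  carrier := {g : L | ⁅g, v⁆ = 0}
  add_mem' := by
    intro a b ha hb
    simp only [Set.mem_setOf_eq] at *
    rw [add_lie, ha, hb, add_zero]
  zero_mem' := zero_lie v
  smul_mem' := by
    intro c g hg
    simp only [Set.mem_setOf_eq] at *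
    rw [smul_lie, hg, smul_zero]


section Lattice

variable {α : Type*} [Lattice α] [IsModularLattice α] [BoundedOrder α] [ComplementedLattice α]

theorem exists_le_disjoint_le_sup (a b : α) : ∃ c ≤ a, Disjoint c b ∧ a ≤ c ⊔ b := by
  obtain ⟨c, hdisj, hsup⟩ := IsModularLattice.exists_disjoint_and_sup_eq (inf_le_left : a ⊓ b ≤ a)
  have hca : c ≤ a := hsup ▸ le_sup_right
  refine ⟨c, hca, ?_, ?_⟩
  · rw [disjoint_iff, ← inf_eq_left.mpr hca, inf_assoc, inf_comm]
    exact disjoint_iff.mp hdisj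
  · calc a = a ⊓ b ⊔ c := hsup.symm
      _ ≤ c ⊔ b := sup_le (inf_le_right.trans le_sup_right) le_sup_left

end Lattice

theorem Submodule.finrank_add_finrank_le_of_disjoint_of_sup_le {K V : Type*} [DivisionRing K]
    [AddCommGroup V] [Module K V] [FiniteDimensional K V] {s t u : Submodule K V}
    (h : Disjoint s t) (hu : s ⊔ t ≤ u) : finrank K s + finrank K t ≤ finrank K u := by
  have := Submodule.finrank_sup_add_finrank_inf_eq s t
  rw [h.eq_bot, finrank_bot, add_zero] at this
  exact this ▸ Submodule.finrank_mono hu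

section Graded

variable {W : Type*} [AddCommGroup W] [Module ℂ W] (𝒲 : ℤ → Submodule ℂ W) [Decomposition 𝒲]

@[simp]
lemma grComp_zero (i : ℤ) : grComp 𝒲 0 i = 0 := by
  simp [grComp]

@[simp]
lemma grComp_add (v w : W) (i : ℤ) : grComp 𝒲 (v + w) i = grComp 𝒲 v i + grComp 𝒲 w i := by
  simp [grComp]

@[simp]
lemma grComp_smul (c : ℂ) (v : W) (i : ℤ) : grComp 𝒲 (c • v) i = c • grComp 𝒲 v i := by
  simp [grComp, decompose_smul, DirectSum.smul_apply]

lemma grComp_sum {ι : Type*} (t : Finset ι) (f : ι → W) (i : ℤ) :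
    grComp 𝒲 (∑ j ∈ t, f j) i = ∑ j ∈ t, grComp 𝒲 (f j) i := by
  simp [grComp, decompose_sum]

lemma grComp_of_mem_s19 {v : W} {j : ℤ} (hv : v ∈ 𝒲 j) (i : ℤ) :
    grComp 𝒲 v i = if j = i then v else 0 := by
  split_ifs with h
  · subst h; exact decompose_of_mem_same 𝒲 hv
  · exact decompose_of_mem_ne 𝒲 hv h

lemma grComp_mem_of_mem_iSup {T : ℤ → Submodule ℂ W} (hT : ∀ i, T i ≤ 𝒲 i) {v : W}
    (hv : v ∈ ⨆ i, T i) (i : ℤ) : grComp 𝒲 v i ∈ T i := by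
  induction hv using Submodule.iSup_induction' with
  | mem j v hv =>
    rw [grComp_of_mem_s19 𝒲 (hT j hv)]
    split_ifs with h
    · exact h ▸ hv
    · exact zero_mem _
  | zero => simp
  | add v w _ _ hv hw => simpa using add_mem hv hw

lemma exists_min_grComp_ne_zero {v : W} (hv : v ≠ 0) :
    ∃ i₀, grComp 𝒲 v i₀ ≠ 0 ∧ ∀ i < i₀, grComp 𝒲 v i = 0 := by
  classical
  have hsupp : (decompose 𝒲 v).support.Nonempty := by
    rw [Finset.nonempty_iff_ne_empty, Ne, DFinsupp.support_eq_empty]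
    exact fun h => hv (by simpa using congrArg (decompose 𝒲).symm h)
  refine ⟨_, ?_, fun i (hi : i < (decompose 𝒲 v).support.min' hsupp) => ?_⟩
  · simpa [grComp] using DFinsupp.mem_support_iff.mp ((decompose 𝒲 v).support.min'_mem hsupp)
  · have : i ∉ (decompose 𝒲 v).support := fun h => hi.not_ge (Finset.min'_le _ _ h)
    simpa [grComp] using DFinsupp.notMem_support_iff.mp this

end Graded

section Lie

variable {L V : Type*} [LieRing L] [LieAlgebra ℂ L] [AddCommGroup V] [Module ℂ V]
  [LieRingModule L V] {𝒢 : ℤ → Submodule ℂ L} {𝒱 : ℤ → Submodule ℂ V} [Decomposition 𝒱]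

lemma grComp_lie_of_mem (hact : ∀ (j i : ℤ), ∀ x ∈ 𝒢 j, ∀ v ∈ 𝒱 i, ⁅x, v⁆ ∈ 𝒱 (i + j))
    {i : ℤ} {x : L} (hx : x ∈ 𝒢 i) (w : V) (a : ℤ) :
    grComp 𝒱 ⁅x, w⁆ a = ⁅x, grComp 𝒱 w (a - i)⁆ := by
  refine Decomposition.inductionOn 𝒱 (by simp) (fun {j} m => ?_) (fun u v hu hv => ?_) w
  · rw [grComp_of_mem_s19 𝒱 (hact i j x hx m m.2), grComp_of_mem_s19 𝒱 m.2]
    by_cases h : j + i = a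
    · rw [if_pos h, if_pos (by omega)]
    · rw [if_neg h, if_neg (by omega), lie_zero]
  · simp [lie_add, hu, hv]

lemma grComp_lie_eq_of_lt_eq_zero [Decomposition 𝒢]
    (hact : ∀ (j i : ℤ), ∀ x ∈ 𝒢 j, ∀ v ∈ 𝒱 i, ⁅x, v⁆ ∈ 𝒱 (i + j))
    {d : ℤ} {y : V} (hlow : ∀ i < d, grComp 𝒱 y i = 0) {s : L} {i₀ : ℤ}
    (hs : ∀ i < i₀, grComp 𝒢 s i = 0) :
    grComp 𝒱 ⁅s, y⁆ (d + i₀) = ⁅grComp 𝒢 s i₀, grComp 𝒱 y d⁆ := by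
  classical
  conv_lhs => rw [← sum_support_decompose 𝒢 s]
  rw [sum_lie, grComp_sum, Finset.sum_eq_single i₀]
  · rw [grComp_lie_of_mem hact (decompose 𝒢 s i₀).2, add_sub_cancel_right]
    rfl
  · intro i _ hi
    rw [grComp_lie_of_mem hact (decompose 𝒢 s i).2]
    rcases hi.lt_or_gt with hlt | hgt
    · rw [show (decompose 𝒢 s i : L) = grComp 𝒢 s i from rfl, hs i hlt, zero_lie]
    · rw [hlow _ (by omega), lie_zero]
  · intro h
    rw [DFinsupp.notMem_support_iff.mp h, ZeroMemClass.coe_zero, zero_lie, grComp_zero]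

variable [LieModule ℂ L V]

@[simp]
lemma mem_lieStab {v : V} {g : L} : g ∈ lieStab L v ↔ ⁅g, v⁆ = 0 := Iff.rfl

variable (L 𝒱) in
/-- The paper's `𝒢_{y,d}`. -/
def lieStabBelow (y : V) (d : ℤ) : Submodule ℂ L where
  carrier := {g | ∀ a < d, grComp 𝒱 ⁅g, y⁆ a = 0}
  add_mem' ha hb a h := by simp [add_lie, ha a h, hb a h]
  zero_mem' a _ := by simp
  smul_mem' c g hg a h := by simp [smul_lie, hg a h]

lemma lieStab_le_lieStabBelow (y : V) (d : ℤ) :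
    lieStab L y ≤ lieStabBelow L 𝒱 y d := fun g hg a _ => by
  rw [(mem_lieStab).mp hg, grComp_zero]

lemma iSup_nonneg_le_lieStabBelow
    (hact : ∀ (j i : ℤ), ∀ x ∈ 𝒢 j, ∀ v ∈ 𝒱 i, ⁅x, v⁆ ∈ 𝒱 (i + j))
    {d : ℤ} {y : V} (hlow : ∀ i < d, grComp 𝒱 y i = 0) :
    (⨆ i : ℤ, ⨆ _ : 0 ≤ i, 𝒢 i) ≤ lieStabBelow L 𝒱 y d :=
  iSup₂_le fun i hi g hg a ha => by
    rw [grComp_lie_of_mem hact hg, hlow _ (by omega), lie_zero]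

variable [Decomposition 𝒢]

lemma exists_grComp_lie_ne_zero
    (hact : ∀ (j i : ℤ), ∀ x ∈ 𝒢 j, ∀ v ∈ 𝒱 i, ⁅x, v⁆ ∈ 𝒱 (i + j))
    {d : ℤ} {y : V} (hlow : ∀ i < d, grComp 𝒱 y i = 0) {S : ℤ → Submodule ℂ L}
    (hS𝒢 : ∀ i, S i ≤ 𝒢 i) (hSz : ∀ i, Disjoint (S i) (lieStab L (grComp 𝒱 y d)))
    (p : ℤ → Prop) {s : L} (hs : s ∈ ⨆ i, ⨆ _ : p i, S i) (hs0 : s ≠ 0) :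
    ∃ i, p i ∧ grComp 𝒱 ⁅s, y⁆ (d + i) ≠ 0 := by
  obtain ⟨i₀, hne, hlt⟩ := exists_min_grComp_ne_zero 𝒢 hs0
  have hmem := grComp_mem_of_mem_iSup 𝒢 (fun i => iSup_le fun _ => hS𝒢 i) hs i₀
  by_cases hp : p i₀
  · rw [iSup_pos hp] at hmem
    refine ⟨i₀, hp, fun h => hne ?_⟩
    rw [grComp_lie_eq_of_lt_eq_zero hact hlow hlt] at h
    exact Submodule.disjoint_def.mp (hSz i₀) _ hmem h
  · rw [iSup_neg hp] at hmem
    exact absurd ((Submodule.mem_bot ℂ).mp hmem) hne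

theorem finrank_lieStabBelow_add_finrank_lieStab_le [FiniteDimensional ℂ L]
    (hact : ∀ (j i : ℤ), ∀ x ∈ 𝒢 j, ∀ v ∈ 𝒱 i, ⁅x, v⁆ ∈ 𝒱 (i + j))
    {d : ℤ} {y : V} (hlow : ∀ i < d, grComp 𝒱 y i = 0) :
    finrank ℂ (lieStabBelow L 𝒱 y d) + finrank ℂ (lieStab L y) ≤
      finrank ℂ (lieStab L (grComp 𝒱 y d)) +
        finrank ℂ ↥((⨆ i : ℤ, ⨆ _ : 0 ≤ i, 𝒢 i) ⊔ lieStab L y) := by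
  set H := lieStab L (grComp 𝒱 y d)
  choose S hS𝒢 hSH h𝒢S using fun i => exists_le_disjoint_le_sup (𝒢 i) H
  set Sneg := ⨆ i, ⨆ _ : i < 0, S i
  set Snonneg := ⨆ i, ⨆ _ : 0 ≤ i, S i
  have hcover : ⊤ ≤ Sneg ⊔ Snonneg ⊔ H := by
    rw [← (Decomposition.isInternal 𝒢).submodule_iSup_eq_top]
    refine iSup_le fun i => (h𝒢S i).trans (sup_le_sup_right ?_ H)
    rcases lt_or_ge i 0 with hi | hi
    · exact le_sup_of_le_left (le_iSup₂_of_le (f := fun i (_ : i < 0) => S i) i hi le_rfl)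
    · exact le_sup_of_le_right (le_iSup₂_of_le (f := fun i (_ : 0 ≤ i) => S i) i hi le_rfl)
  have hneg : Disjoint Sneg (lieStabBelow L 𝒱 y d) :=
    Submodule.disjoint_def.mpr fun s hs hsG => by
      by_contra hs0
      obtain ⟨i, hi, hne⟩ := exists_grComp_lie_ne_zero hact hlow hS𝒢 hSH (· < 0) hs hs0
      exact hne (hsG _ (by omega))
  have hnonneg : Disjoint Snonneg (lieStab L y) :=
    Submodule.disjoint_def.mpr fun s hs hsK => by
      by_contra hs0
      obtain ⟨i, -, hne⟩ := exists_grComp_lie_ne_zero hact hlow hS𝒢 hSH (0 ≤ ·) hs hs0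
      exact hne (by rw [(mem_lieStab).mp hsK, grComp_zero])
  have h1 := Submodule.finrank_add_finrank_le_of_disjoint hneg
  have h2 := Submodule.finrank_add_finrank_le_of_disjoint_of_sup_le hnonneg
    (sup_le_sup_right (iSup₂_mono fun i _ => hS𝒢 i) _)
  have h3 : finrank ℂ L ≤ finrank ℂ Sneg + finrank ℂ Snonneg + finrank ℂ H := by
    rw [← finrank_top ℂ L]
    calc finrank ℂ (⊤ : Submodule ℂ L) ≤ finrank ℂ ↥(Sneg ⊔ Snonneg ⊔ H) :=
          Submodule.finrank_mono hcover
      _ ≤ finrank ℂ ↥(Sneg ⊔ Snonneg) + finrank ℂ H :=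
          Submodule.finrank_add_le_finrank_add_finrank _ _
      _ ≤ _ := Nat.add_le_add_right (Submodule.finrank_add_le_finrank_add_finrank _ _) _
  omega

end Lie

theorem statement19_general {L V : Type*} [LieRing L] [LieAlgebra ℂ L] [FiniteDimensional ℂ L]
    [AddCommGroup V] [Module ℂ V]
    [LieRingModule L V] [LieModule ℂ L V]
    (𝒢 : ℤ → Submodule ℂ L) [Decomposition 𝒢]
    (𝒱 : ℤ → Submodule ℂ V) [Decomposition 𝒱]
    (hact : ∀ (j i : ℤ), ∀ x ∈ 𝒢 j, ∀ v ∈ 𝒱 i, ⁅x, v⁆ ∈ 𝒱 (i + j))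
    (d : ℤ) (y : V)
    (hlow : ∀ i < d, grComp 𝒱 y i = 0) :
    ∃ Gyd : Submodule ℂ L,
      (Gyd : Set L) = {g : L | ∀ a < d, grComp 𝒱 ⁅g, y⁆ a = 0} ∧
      (⨆ i : ℤ, ⨆ _ : 0 ≤ i, 𝒢 i) ⊔ lieStab L y ≤ Gyd ∧
      ∃ F : Submodule ℂ L, F ≤ Gyd ∧
        (finrank ℂ F : ℤ) ≤
          (finrank ℂ (lieStab L (grComp 𝒱 y d)) : ℤ) - (finrank ℂ (lieStab L y) : ℤ) ∧
        Gyd = (⨆ i : ℤ, ⨆ _ : 0 ≤ i, 𝒢 i) ⊔ lieStab L y ⊔ F := by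
  obtain ⟨F, hdisj, hsup⟩ := IsModularLattice.exists_disjoint_and_sup_eq
    (sup_le (iSup_nonneg_le_lieStabBelow hact hlow) (lieStab_le_lieStabBelow y d))
  refine ⟨lieStabBelow L 𝒱 y d, rfl, le_sup_left.trans hsup.le, F, le_sup_right.trans hsup.le,
    ?_, hsup.symm⟩
  have hF := Submodule.finrank_add_finrank_le_of_disjoint_of_sup_le hdisj.symm
    (sup_comm F _ ▸ hsup.le)
  have := finrank_lieStabBelow_add_finrank_lieStab_le hact hlow
  omega

theorem statement19 {L V : Type*} [LieRing L] [LieAlgebra ℂ L] [FiniteDimensional ℂ L]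
    [AddCommGroup V] [Module ℂ V] [FiniteDimensional ℂ V]
    [LieRingModule L V] [LieModule ℂ L V]
    (𝒢 : ℤ → Submodule ℂ L) [Decomposition 𝒢]
    (𝒱 : ℤ → Submodule ℂ V) [Decomposition 𝒱]
    (hbr : ∀ (i j : ℤ), ∀ x ∈ 𝒢 i, ∀ y ∈ 𝒢 j, ⁅x, y⁆ ∈ 𝒢 (i + j))
    (hact : ∀ (j i : ℤ), ∀ x ∈ 𝒢 j, ∀ v ∈ 𝒱 i, ⁅x, v⁆ ∈ 𝒱 (i + j))
    (d : ℤ) (y : V) (hy : y ≠ 0)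
    (hlow : ∀ i < d, grComp 𝒱 y i = 0)
    (hz : grComp 𝒱 y d ≠ 0) :
    ∃ Gyd : Submodule ℂ L,
      (Gyd : Set L) = {g : L | ∀ a < d, grComp 𝒱 ⁅g, y⁆ a = 0} ∧
      (⨆ i : ℤ, ⨆ _ : 0 ≤ i, 𝒢 i) ⊔ lieStab L y ≤ Gyd ∧
      ∃ F : Submodule ℂ L, F ≤ Gyd ∧
        (finrank ℂ F : ℤ) ≤
          (finrank ℂ (lieStab L (grComp 𝒱 y d)) : ℤ) - (finrank ℂ (lieStab L y) : ℤ) ∧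
        Gyd = (⨆ i : ℤ, ⨆ _ : 0 ≤ i, 𝒢 i) ⊔ lieStab L y ⊔ F :=
  statement19_general 𝒢 𝒱 hact d y hlow
end
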